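/- Let F = 1 + ∑_{n≥1} f_n X^n be the unique formal power series over ℚ with constant term 1 satisfying F(X) = exp(∑_{k≥1} (X^k/(2k))(F(X^{2k}) + F(X^k)²)). Then f_1 = 1, f_2 = 2, f_3 = 5, f_4 = 13, f_5 = 37, f_6 = 111, f_7 = 345, f_8 = 1105. -/

import Mathlib

open PowerSeries Finset

/-- Infinite product `∏_{k≥1} B k` (each `B k ≡ 1 mod X^k`), coefficient-wise. -/
noncomputable def seriesProd (B : ℕ → PowerSeries ℚ) : PowerSeries ℚ :=
  PowerSeries.mk fun d => PowerSeries.coeff d (∏ k ∈ Finset.Icc 1 d, B k)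

/-- Infinite sum `∑_{n≥1} A n` (each `A n ≡ 0 mod X^n`), coefficient-wise. -/
noncomputable def seriesSum (A : ℕ → PowerSeries ℚ) : PowerSeries ℚ :=
  PowerSeries.mk fun d => ∑ n ∈ Finset.Icc 1 d, PowerSeries.coeff d (A n)

/-- Substitution of `X^m` into `F`: `substXPow m F = F(X^m)` (for `m ≥ 1`). -/
noncomputable def substXPow (m : ℕ) (F : PowerSeries ℚ) : PowerSeries ℚ :=
  PowerSeries.mk fun d => if m ∣ d then PowerSeries.coeff (d / m) F else 0

/-- Formal exponential of a series with zero constant term, coefficient-wise. -/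
noncomputable def expComp (L : PowerSeries ℚ) : PowerSeries ℚ :=
  PowerSeries.mk fun d =>
    ∑ j ∈ Finset.range (d + 1), (j.factorial : ℚ)⁻¹ * PowerSeries.coeff d (L ^ j)

/-- The right-hand side `exp (∑_{n≥1} (X^n/(2n)) (F(X^{2n}) + F(X^n)²))` of the functional
equation. -/
noncomputable def funcEqRHS (F : PowerSeries ℚ) : PowerSeries ℚ :=
  expComp (seriesSum fun n =>
    PowerSeries.C (1 / (2 * n : ℚ)) * PowerSeries.X ^ n *
      (substXPow (2 * n) F + (substXPow n F) ^ 2))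

noncomputable def Lser (F : PowerSeries ℚ) : PowerSeries ℚ :=
  seriesSum fun n =>
    PowerSeries.C (1 / (2 * n : ℚ)) * PowerSeries.X ^ n *
      (substXPow (2 * n) F + (substXPow n F) ^ 2)

lemma coeff_pow_succ (A : PowerSeries ℚ) (j d : ℕ) :
    PowerSeries.coeff d (A ^ (j + 1)) =
      ∑ i ∈ Finset.range (d + 1),
        PowerSeries.coeff i A * PowerSeries.coeff (d - i) (A ^ j) := by
  rw [pow_succ, mul_comm, PowerSeries.coeff_mul,
    Finset.Nat.sum_antidiagonal_eq_sum_range_succ_mk]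

lemma coeff_Lser (F : PowerSeries ℚ) (e : ℕ) :
    PowerSeries.coeff e (Lser F) =
      ∑ n ∈ Finset.Icc 1 e, (1 / (2 * n : ℚ)) *
        ((if 2 * n ∣ e - n then PowerSeries.coeff ((e - n) / (2 * n)) F else 0) +
          ∑ i ∈ Finset.range (e - n + 1),
            (if n ∣ i then PowerSeries.coeff (i / n) F else 0) *
            (if n ∣ e - n - i then PowerSeries.coeff ((e - n - i) / n) F else 0)) := by
  rw [Lser, seriesSum, PowerSeries.coeff_mk]
  refine Finset.sum_congr rfl fun n hn => ?_
  obtain ⟨h1, h2⟩ := Finset.mem_Icc.mp hn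
  rw [mul_assoc, PowerSeries.coeff_C_mul, PowerSeries.coeff_X_pow_mul', if_pos h2,
    map_add, sq, PowerSeries.coeff_mul, Finset.Nat.sum_antidiagonal_eq_sum_range_succ_mk]
  simp [substXPow, PowerSeries.coeff_mk]

lemma coeff_expComp (L : PowerSeries ℚ) (d : ℕ) :
    PowerSeries.coeff d (expComp L) =
      ∑ j ∈ Finset.range (d + 1),
        (j.factorial : ℚ)⁻¹ * PowerSeries.coeff d (L ^ j) :=
  PowerSeries.coeff_mk _ _

set_option maxHeartbeats 4000000 in
/-- The coefficients `f_1, …, f_8` of the unique `F` with constant term `1` satisfying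
`F = exp (∑_{k≥1} (X^k/(2k)) (F(X^{2k}) + F(X^k)²))` are `1, 2, 5, 13, 37, 111, 345, 1105`. -/
theorem coeffs_of_functional_equation (F : PowerSeries ℚ)
    (hF1 : PowerSeries.constantCoeff F = 1)
    (hF : F = funcEqRHS F) :
    PowerSeries.coeff 1 F = 1 ∧ PowerSeries.coeff 2 F = 2 ∧
    PowerSeries.coeff 3 F = 5 ∧ PowerSeries.coeff 4 F = 13 ∧
    PowerSeries.coeff 5 F = 37 ∧ PowerSeries.coeff 6 F = 111 ∧
    PowerSeries.coeff 7 F = 345 ∧ PowerSeries.coeff 8 F = 1105 := by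
  have hre : funcEqRHS F = expComp (Lser F) := rfl
  have ha0 : PowerSeries.coeff 0 F = 1 := by
    rw [PowerSeries.coeff_zero_eq_constantCoeff]; exact hF1
  have hc0 : PowerSeries.coeff 0 (Lser F) = 0 := by
    rw [coeff_Lser]; simp
  have hc1 : PowerSeries.coeff 1 (Lser F) = 1 := by
    rw [coeff_Lser, ← Finset.Ico_add_one_right_eq_Icc, Finset.sum_Ico_eq_sum_range]
    norm_num [Finset.sum_range_succ, ha0]
  have ha1 : PowerSeries.coeff 1 F = 1 := by
    conv_lhs => rw [hF]
    rw [hre, coeff_expComp]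
    norm_num [Finset.sum_range_succ, Nat.factorial, pow_zero, pow_one, PowerSeries.coeff_one, hc1]
  have hc2 : PowerSeries.coeff 2 (Lser F) = 3/2 := by
    rw [coeff_Lser, ← Finset.Ico_add_one_right_eq_Icc, Finset.sum_Ico_eq_sum_range]
    norm_num [Finset.sum_range_succ, ha0, ha1]
  have hP2_0 : PowerSeries.coeff 0 ((Lser F) ^ 2) = 0 := by
    rw [(by norm_num : (2:ℕ) = 1 + 1), coeff_pow_succ]
    norm_num [Finset.sum_range_succ, pow_one, hc0]
  have hP2_1 : PowerSeries.coeff 1 ((Lser F) ^ 2) = 0 := by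
    rw [(by norm_num : (2:ℕ) = 1 + 1), coeff_pow_succ]
    norm_num [Finset.sum_range_succ, pow_one, hc0, hc1]
  have hP2_2 : PowerSeries.coeff 2 ((Lser F) ^ 2) = 1 := by
    rw [(by norm_num : (2:ℕ) = 1 + 1), coeff_pow_succ]
    norm_num [Finset.sum_range_succ, pow_one, hc0, hc1, hc2]
  have ha2 : PowerSeries.coeff 2 F = 2 := by
    conv_lhs => rw [hF]
    rw [hre, coeff_expComp]
    norm_num [Finset.sum_range_succ, Nat.factorial, pow_zero, pow_one, PowerSeries.coeff_one, hc2, hP2_2]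
  have hc3 : PowerSeries.coeff 3 (Lser F) = 10/3 := by
    rw [coeff_Lser, ← Finset.Ico_add_one_right_eq_Icc, Finset.sum_Ico_eq_sum_range]
    norm_num [Finset.sum_range_succ, ha0, ha1, ha2]
  have hP2_3 : PowerSeries.coeff 3 ((Lser F) ^ 2) = 3 := by
    rw [(by norm_num : (2:ℕ) = 1 + 1), coeff_pow_succ]
    norm_num [Finset.sum_range_succ, pow_one, hc0, hc1, hc2, hc3]
  have hP3_0 : PowerSeries.coeff 0 ((Lser F) ^ 3) = 0 := by
    rw [(by norm_num : (3:ℕ) = 2 + 1), coeff_pow_succ]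
    norm_num [Finset.sum_range_succ, pow_one, hc0, hP2_0]
  have hP3_1 : PowerSeries.coeff 1 ((Lser F) ^ 3) = 0 := by
    rw [(by norm_num : (3:ℕ) = 2 + 1), coeff_pow_succ]
    norm_num [Finset.sum_range_succ, pow_one, hc0, hc1, hP2_0, hP2_1]
  have hP3_2 : PowerSeries.coeff 2 ((Lser F) ^ 3) = 0 := by
    rw [(by norm_num : (3:ℕ) = 2 + 1), coeff_pow_succ]
    norm_num [Finset.sum_range_succ, pow_one, hc0, hc1, hc2, hP2_0, hP2_1, hP2_2]
  have hP3_3 : PowerSeries.coeff 3 ((Lser F) ^ 3) = 1 := by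
    rw [(by norm_num : (3:ℕ) = 2 + 1), coeff_pow_succ]
    norm_num [Finset.sum_range_succ, pow_one, hc0, hc1, hc2, hc3, hP2_0, hP2_1, hP2_2, hP2_3]
  have ha3 : PowerSeries.coeff 3 F = 5 := by
    conv_lhs => rw [hF]
    rw [hre, coeff_expComp]
    norm_num [Finset.sum_range_succ, Nat.factorial, pow_zero, pow_one, PowerSeries.coeff_one, hc3, hP2_3, hP3_3]
  have hc4 : PowerSeries.coeff 4 (Lser F) = 31/4 := by
    rw [coeff_Lser, ← Finset.Ico_add_one_right_eq_Icc, Finset.sum_Ico_eq_sum_range]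
    norm_num [Finset.sum_range_succ, ha0, ha1, ha2, ha3]
  have hP2_4 : PowerSeries.coeff 4 ((Lser F) ^ 2) = 107/12 := by
    rw [(by norm_num : (2:ℕ) = 1 + 1), coeff_pow_succ]
    norm_num [Finset.sum_range_succ, pow_one, hc0, hc1, hc2, hc3, hc4]
  have hP3_4 : PowerSeries.coeff 4 ((Lser F) ^ 3) = 9/2 := by
    rw [(by norm_num : (3:ℕ) = 2 + 1), coeff_pow_succ]
    norm_num [Finset.sum_range_succ, pow_one, hc0, hc1, hc2, hc3, hc4, hP2_0, hP2_1, hP2_2, hP2_3, hP2_4]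
  have hP4_0 : PowerSeries.coeff 0 ((Lser F) ^ 4) = 0 := by
    rw [(by norm_num : (4:ℕ) = 3 + 1), coeff_pow_succ]
    norm_num [Finset.sum_range_succ, pow_one, hc0, hP3_0]
  have hP4_1 : PowerSeries.coeff 1 ((Lser F) ^ 4) = 0 := by
    rw [(by norm_num : (4:ℕ) = 3 + 1), coeff_pow_succ]
    norm_num [Finset.sum_range_succ, pow_one, hc0, hc1, hP3_0, hP3_1]
  have hP4_2 : PowerSeries.coeff 2 ((Lser F) ^ 4) = 0 := by
    rw [(by norm_num : (4:ℕ) = 3 + 1), coeff_pow_succ]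
    norm_num [Finset.sum_range_succ, pow_one, hc0, hc1, hc2, hP3_0, hP3_1, hP3_2]
  have hP4_3 : PowerSeries.coeff 3 ((Lser F) ^ 4) = 0 := by
    rw [(by norm_num : (4:ℕ) = 3 + 1), coeff_pow_succ]
    norm_num [Finset.sum_range_succ, pow_one, hc0, hc1, hc2, hc3, hP3_0, hP3_1, hP3_2, hP3_3]
  have hP4_4 : PowerSeries.coeff 4 ((Lser F) ^ 4) = 1 := by
    rw [(by norm_num : (4:ℕ) = 3 + 1), coeff_pow_succ]
    norm_num [Finset.sum_range_succ, pow_one, hc0, hc1, hc2, hc3, hc4, hP3_0, hP3_1, hP3_2, hP3_3, hP3_4]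
  have ha4 : PowerSeries.coeff 4 F = 13 := by
    conv_lhs => rw [hF]
    rw [hre, coeff_expComp]
    norm_num [Finset.sum_range_succ, Nat.factorial, pow_zero, pow_one, PowerSeries.coeff_one, hc4, hP2_4, hP3_4, hP4_4]
  have hc5 : PowerSeries.coeff 5 (Lser F) = 106/5 := by
    rw [coeff_Lser, ← Finset.Ico_add_one_right_eq_Icc, Finset.sum_Ico_eq_sum_range]
    norm_num [Finset.sum_range_succ, ha0, ha1, ha2, ha3, ha4]
  have hP2_5 : PowerSeries.coeff 5 ((Lser F) ^ 2) = 51/2 := by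
    rw [(by norm_num : (2:ℕ) = 1 + 1), coeff_pow_succ]
    norm_num [Finset.sum_range_succ, pow_one, hc0, hc1, hc2, hc3, hc4, hc5]
  have hP3_5 : PowerSeries.coeff 5 ((Lser F) ^ 3) = 67/4 := by
    rw [(by norm_num : (3:ℕ) = 2 + 1), coeff_pow_succ]
    norm_num [Finset.sum_range_succ, pow_one, hc0, hc1, hc2, hc3, hc4, hc5, hP2_0, hP2_1, hP2_2, hP2_3, hP2_4, hP2_5]
  have hP4_5 : PowerSeries.coeff 5 ((Lser F) ^ 4) = 6 := by
    rw [(by norm_num : (4:ℕ) = 3 + 1), coeff_pow_succ]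
    norm_num [Finset.sum_range_succ, pow_one, hc0, hc1, hc2, hc3, hc4, hc5, hP3_0, hP3_1, hP3_2, hP3_3, hP3_4, hP3_5]
  have hP5_0 : PowerSeries.coeff 0 ((Lser F) ^ 5) = 0 := by
    rw [(by norm_num : (5:ℕ) = 4 + 1), coeff_pow_succ]
    norm_num [Finset.sum_range_succ, pow_one, hc0, hP4_0]
  have hP5_1 : PowerSeries.coeff 1 ((Lser F) ^ 5) = 0 := by
    rw [(by norm_num : (5:ℕ) = 4 + 1), coeff_pow_succ]
    norm_num [Finset.sum_range_succ, pow_one, hc0, hc1, hP4_0, hP4_1]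
  have hP5_2 : PowerSeries.coeff 2 ((Lser F) ^ 5) = 0 := by
    rw [(by norm_num : (5:ℕ) = 4 + 1), coeff_pow_succ]
    norm_num [Finset.sum_range_succ, pow_one, hc0, hc1, hc2, hP4_0, hP4_1, hP4_2]
  have hP5_3 : PowerSeries.coeff 3 ((Lser F) ^ 5) = 0 := by
    rw [(by norm_num : (5:ℕ) = 4 + 1), coeff_pow_succ]
    norm_num [Finset.sum_range_succ, pow_one, hc0, hc1, hc2, hc3, hP4_0, hP4_1, hP4_2, hP4_3]
  have hP5_4 : PowerSeries.coeff 4 ((Lser F) ^ 5) = 0 := by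
    rw [(by norm_num : (5:ℕ) = 4 + 1), coeff_pow_succ]
    norm_num [Finset.sum_range_succ, pow_one, hc0, hc1, hc2, hc3, hc4, hP4_0, hP4_1, hP4_2, hP4_3, hP4_4]
  have hP5_5 : PowerSeries.coeff 5 ((Lser F) ^ 5) = 1 := by
    rw [(by norm_num : (5:ℕ) = 4 + 1), coeff_pow_succ]
    norm_num [Finset.sum_range_succ, pow_one, hc0, hc1, hc2, hc3, hc4, hc5, hP4_0, hP4_1, hP4_2, hP4_3, hP4_4, hP4_5]
  have ha5 : PowerSeries.coeff 5 F = 37 := by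
    conv_lhs => rw [hF]
    rw [hre, coeff_expComp]
    norm_num [Finset.sum_range_succ, Nat.factorial, pow_zero, pow_one, PowerSeries.coeff_one, hc5, hP2_5, hP3_5, hP4_5, hP5_5]
  have hc6 : PowerSeries.coeff 6 (Lser F) = 62 := by
    rw [coeff_Lser, ← Finset.Ico_add_one_right_eq_Icc, Finset.sum_Ico_eq_sum_range]
    norm_num [Finset.sum_range_succ, ha0, ha1, ha2, ha3, ha4, ha5]
  have hP2_6 : PowerSeries.coeff 6 ((Lser F) ^ 2) = 13817/180 := by
    rw [(by norm_num : (2:ℕ) = 1 + 1), coeff_pow_succ]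
    norm_num [Finset.sum_range_succ, pow_one, hc0, hc1, hc2, hc3, hc4, hc5, hc6]
  have hP3_6 : PowerSeries.coeff 6 ((Lser F) ^ 3) = 453/8 := by
    rw [(by norm_num : (3:ℕ) = 2 + 1), coeff_pow_succ]
    norm_num [Finset.sum_range_succ, pow_one, hc0, hc1, hc2, hc3, hc4, hc5, hc6, hP2_0, hP2_1, hP2_2, hP2_3, hP2_4, hP2_5, hP2_6]
  have hP4_6 : PowerSeries.coeff 6 ((Lser F) ^ 4) = 161/6 := by
    rw [(by norm_num : (4:ℕ) = 3 + 1), coeff_pow_succ]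
    norm_num [Finset.sum_range_succ, pow_one, hc0, hc1, hc2, hc3, hc4, hc5, hc6, hP3_0, hP3_1, hP3_2, hP3_3, hP3_4, hP3_5, hP3_6]
  have hP5_6 : PowerSeries.coeff 6 ((Lser F) ^ 5) = 15/2 := by
    rw [(by norm_num : (5:ℕ) = 4 + 1), coeff_pow_succ]
    norm_num [Finset.sum_range_succ, pow_one, hc0, hc1, hc2, hc3, hc4, hc5, hc6, hP4_0, hP4_1, hP4_2, hP4_3, hP4_4, hP4_5, hP4_6]
  have hP6_0 : PowerSeries.coeff 0 ((Lser F) ^ 6) = 0 := by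
    rw [(by norm_num : (6:ℕ) = 5 + 1), coeff_pow_succ]
    norm_num [Finset.sum_range_succ, pow_one, hc0, hP5_0]
  have hP6_1 : PowerSeries.coeff 1 ((Lser F) ^ 6) = 0 := by
    rw [(by norm_num : (6:ℕ) = 5 + 1), coeff_pow_succ]
    norm_num [Finset.sum_range_succ, pow_one, hc0, hc1, hP5_0, hP5_1]
  have hP6_2 : PowerSeries.coeff 2 ((Lser F) ^ 6) = 0 := by
    rw [(by norm_num : (6:ℕ) = 5 + 1), coeff_pow_succ]
    norm_num [Finset.sum_range_succ, pow_one, hc0, hc1, hc2, hP5_0, hP5_1, hP5_2]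
  have hP6_3 : PowerSeries.coeff 3 ((Lser F) ^ 6) = 0 := by
    rw [(by norm_num : (6:ℕ) = 5 + 1), coeff_pow_succ]
    norm_num [Finset.sum_range_succ, pow_one, hc0, hc1, hc2, hc3, hP5_0, hP5_1, hP5_2, hP5_3]
  have hP6_4 : PowerSeries.coeff 4 ((Lser F) ^ 6) = 0 := by
    rw [(by norm_num : (6:ℕ) = 5 + 1), coeff_pow_succ]
    norm_num [Finset.sum_range_succ, pow_one, hc0, hc1, hc2, hc3, hc4, hP5_0, hP5_1, hP5_2, hP5_3, hP5_4]
  have hP6_5 : PowerSeries.coeff 5 ((Lser F) ^ 6) = 0 := by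
    rw [(by norm_num : (6:ℕ) = 5 + 1), coeff_pow_succ]
    norm_num [Finset.sum_range_succ, pow_one, hc0, hc1, hc2, hc3, hc4, hc5, hP5_0, hP5_1, hP5_2, hP5_3, hP5_4, hP5_5]
  have hP6_6 : PowerSeries.coeff 6 ((Lser F) ^ 6) = 1 := by
    rw [(by norm_num : (6:ℕ) = 5 + 1), coeff_pow_succ]
    norm_num [Finset.sum_range_succ, pow_one, hc0, hc1, hc2, hc3, hc4, hc5, hc6, hP5_0, hP5_1, hP5_2, hP5_3, hP5_4, hP5_5, hP5_6]
  have ha6 : PowerSeries.coeff 6 F = 111 := by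
    conv_lhs => rw [hF]
    rw [hre, coeff_expComp]
    norm_num [Finset.sum_range_succ, Nat.factorial, pow_zero, pow_one, PowerSeries.coeff_one, hc6, hP2_6, hP3_6, hP4_6, hP5_6, hP6_6]
  have hc7 : PowerSeries.coeff 7 (Lser F) = 1324/7 := by
    rw [coeff_Lser, ← Finset.Ico_add_one_right_eq_Icc, Finset.sum_Ico_eq_sum_range]
    norm_num [Finset.sum_range_succ, ha0, ha1, ha2, ha3, ha4, ha5, ha6]
  have hP2_7 : PowerSeries.coeff 7 ((Lser F) ^ 2) = 3589/15 := by
    rw [(by norm_num : (2:ℕ) = 1 + 1), coeff_pow_succ]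
    norm_num [Finset.sum_range_succ, pow_one, hc0, hc1, hc2, hc3, hc4, hc5, hc6, hc7]
  have hP3_7 : PowerSeries.coeff 7 ((Lser F) ^ 3) = 11351/60 := by
    rw [(by norm_num : (3:ℕ) = 2 + 1), coeff_pow_succ]
    norm_num [Finset.sum_range_succ, pow_one, hc0, hc1, hc2, hc3, hc4, hc5, hc6, hc7, hP2_0, hP2_1, hP2_2, hP2_3, hP2_4, hP2_5, hP2_6, hP2_7]
  have hP4_7 : PowerSeries.coeff 7 ((Lser F) ^ 4) = 209/2 := by
    rw [(by norm_num : (4:ℕ) = 3 + 1), coeff_pow_succ]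
    norm_num [Finset.sum_range_succ, pow_one, hc0, hc1, hc2, hc3, hc4, hc5, hc6, hc7, hP3_0, hP3_1, hP3_2, hP3_3, hP3_4, hP3_5, hP3_6, hP3_7]
  have hP5_7 : PowerSeries.coeff 7 ((Lser F) ^ 5) = 235/6 := by
    rw [(by norm_num : (5:ℕ) = 4 + 1), coeff_pow_succ]
    norm_num [Finset.sum_range_succ, pow_one, hc0, hc1, hc2, hc3, hc4, hc5, hc6, hc7, hP4_0, hP4_1, hP4_2, hP4_3, hP4_4, hP4_5, hP4_6, hP4_7]
  have hP6_7 : PowerSeries.coeff 7 ((Lser F) ^ 6) = 9 := by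
    rw [(by norm_num : (6:ℕ) = 5 + 1), coeff_pow_succ]
    norm_num [Finset.sum_range_succ, pow_one, hc0, hc1, hc2, hc3, hc4, hc5, hc6, hc7, hP5_0, hP5_1, hP5_2, hP5_3, hP5_4, hP5_5, hP5_6, hP5_7]
  have hP7_0 : PowerSeries.coeff 0 ((Lser F) ^ 7) = 0 := by
    rw [(by norm_num : (7:ℕ) = 6 + 1), coeff_pow_succ]
    norm_num [Finset.sum_range_succ, pow_one, hc0, hP6_0]
  have hP7_1 : PowerSeries.coeff 1 ((Lser F) ^ 7) = 0 := by
    rw [(by norm_num : (7:ℕ) = 6 + 1), coeff_pow_succ]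
    norm_num [Finset.sum_range_succ, pow_one, hc0, hc1, hP6_0, hP6_1]
  have hP7_2 : PowerSeries.coeff 2 ((Lser F) ^ 7) = 0 := by
    rw [(by norm_num : (7:ℕ) = 6 + 1), coeff_pow_succ]
    norm_num [Finset.sum_range_succ, pow_one, hc0, hc1, hc2, hP6_0, hP6_1, hP6_2]
  have hP7_3 : PowerSeries.coeff 3 ((Lser F) ^ 7) = 0 := by
    rw [(by norm_num : (7:ℕ) = 6 + 1), coeff_pow_succ]
    norm_num [Finset.sum_range_succ, pow_one, hc0, hc1, hc2, hc3, hP6_0, hP6_1, hP6_2, hP6_3]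
  have hP7_4 : PowerSeries.coeff 4 ((Lser F) ^ 7) = 0 := by
    rw [(by norm_num : (7:ℕ) = 6 + 1), coeff_pow_succ]
    norm_num [Finset.sum_range_succ, pow_one, hc0, hc1, hc2, hc3, hc4, hP6_0, hP6_1, hP6_2, hP6_3, hP6_4]
  have hP7_5 : PowerSeries.coeff 5 ((Lser F) ^ 7) = 0 := by
    rw [(by norm_num : (7:ℕ) = 6 + 1), coeff_pow_succ]
    norm_num [Finset.sum_range_succ, pow_one, hc0, hc1, hc2, hc3, hc4, hc5, hP6_0, hP6_1, hP6_2, hP6_3, hP6_4, hP6_5]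
  have hP7_6 : PowerSeries.coeff 6 ((Lser F) ^ 7) = 0 := by
    rw [(by norm_num : (7:ℕ) = 6 + 1), coeff_pow_succ]
    norm_num [Finset.sum_range_succ, pow_one, hc0, hc1, hc2, hc3, hc4, hc5, hc6, hP6_0, hP6_1, hP6_2, hP6_3, hP6_4, hP6_5, hP6_6]
  have hP7_7 : PowerSeries.coeff 7 ((Lser F) ^ 7) = 1 := by
    rw [(by norm_num : (7:ℕ) = 6 + 1), coeff_pow_succ]
    norm_num [Finset.sum_range_succ, pow_one, hc0, hc1, hc2, hc3, hc4, hc5, hc6, hc7, hP6_0, hP6_1, hP6_2, hP6_3, hP6_4, hP6_5, hP6_6, hP6_7]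
  have ha7 : PowerSeries.coeff 7 F = 345 := by
    conv_lhs => rw [hF]
    rw [hre, coeff_expComp]
    norm_num [Finset.sum_range_succ, Nat.factorial, pow_zero, pow_one, PowerSeries.coeff_one, hc7, hP2_7, hP3_7, hP4_7, hP5_7, hP6_7, hP7_7]
  have hc8 : PowerSeries.coeff 8 (Lser F) = 4791/8 := by
    rw [coeff_Lser, ← Finset.Ico_add_one_right_eq_Icc, Finset.sum_Ico_eq_sum_range]
    norm_num [Finset.sum_range_succ, ha0, ha1, ha2, ha3, ha4, ha5, ha6, ha7]
  have hP2_8 : PowerSeries.coeff 8 ((Lser F) ^ 2) = 257269/336 := by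
    rw [(by norm_num : (2:ℕ) = 1 + 1), coeff_pow_succ]
    norm_num [Finset.sum_range_succ, pow_one, hc0, hc1, hc2, hc3, hc4, hc5, hc6, hc7, hc8]
  have hP3_8 : PowerSeries.coeff 8 ((Lser F) ^ 3) = 50729/80 := by
    rw [(by norm_num : (3:ℕ) = 2 + 1), coeff_pow_succ]
    norm_num [Finset.sum_range_succ, pow_one, hc0, hc1, hc2, hc3, hc4, hc5, hc6, hc7, hc8, hP2_0, hP2_1, hP2_2, hP2_3, hP2_4, hP2_5, hP2_6, hP2_7, hP2_8]
  have hP4_8 : PowerSeries.coeff 8 ((Lser F) ^ 4) = 92647/240 := by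
    rw [(by norm_num : (4:ℕ) = 3 + 1), coeff_pow_succ]
    norm_num [Finset.sum_range_succ, pow_one, hc0, hc1, hc2, hc3, hc4, hc5, hc6, hc7, hc8, hP3_0, hP3_1, hP3_2, hP3_3, hP3_4, hP3_5, hP3_6, hP3_7, hP3_8]
  have hP5_8 : PowerSeries.coeff 8 ((Lser F) ^ 5) = 345/2 := by
    rw [(by norm_num : (5:ℕ) = 4 + 1), coeff_pow_succ]
    norm_num [Finset.sum_range_succ, pow_one, hc0, hc1, hc2, hc3, hc4, hc5, hc6, hc7, hc8, hP4_0, hP4_1, hP4_2, hP4_3, hP4_4, hP4_5, hP4_6, hP4_7, hP4_8]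
  have hP6_8 : PowerSeries.coeff 8 ((Lser F) ^ 6) = 215/4 := by
    rw [(by norm_num : (6:ℕ) = 5 + 1), coeff_pow_succ]
    norm_num [Finset.sum_range_succ, pow_one, hc0, hc1, hc2, hc3, hc4, hc5, hc6, hc7, hc8, hP5_0, hP5_1, hP5_2, hP5_3, hP5_4, hP5_5, hP5_6, hP5_7, hP5_8]
  have hP7_8 : PowerSeries.coeff 8 ((Lser F) ^ 7) = 21/2 := by
    rw [(by norm_num : (7:ℕ) = 6 + 1), coeff_pow_succ]
    norm_num [Finset.sum_range_succ, pow_one, hc0, hc1, hc2, hc3, hc4, hc5, hc6, hc7, hc8, hP6_0, hP6_1, hP6_2, hP6_3, hP6_4, hP6_5, hP6_6, hP6_7, hP6_8]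
  have hP8_0 : PowerSeries.coeff 0 ((Lser F) ^ 8) = 0 := by
    rw [(by norm_num : (8:ℕ) = 7 + 1), coeff_pow_succ]
    norm_num [Finset.sum_range_succ, pow_one, hc0, hP7_0]
  have hP8_1 : PowerSeries.coeff 1 ((Lser F) ^ 8) = 0 := by
    rw [(by norm_num : (8:ℕ) = 7 + 1), coeff_pow_succ]
    norm_num [Finset.sum_range_succ, pow_one, hc0, hc1, hP7_0, hP7_1]
  have hP8_2 : PowerSeries.coeff 2 ((Lser F) ^ 8) = 0 := by
    rw [(by norm_num : (8:ℕ) = 7 + 1), coeff_pow_succ]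
    norm_num [Finset.sum_range_succ, pow_one, hc0, hc1, hc2, hP7_0, hP7_1, hP7_2]
  have hP8_3 : PowerSeries.coeff 3 ((Lser F) ^ 8) = 0 := by
    rw [(by norm_num : (8:ℕ) = 7 + 1), coeff_pow_succ]
    norm_num [Finset.sum_range_succ, pow_one, hc0, hc1, hc2, hc3, hP7_0, hP7_1, hP7_2, hP7_3]
  have hP8_4 : PowerSeries.coeff 4 ((Lser F) ^ 8) = 0 := by
    rw [(by norm_num : (8:ℕ) = 7 + 1), coeff_pow_succ]
    norm_num [Finset.sum_range_succ, pow_one, hc0, hc1, hc2, hc3, hc4, hP7_0, hP7_1, hP7_2, hP7_3, hP7_4]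
  have hP8_5 : PowerSeries.coeff 5 ((Lser F) ^ 8) = 0 := by
    rw [(by norm_num : (8:ℕ) = 7 + 1), coeff_pow_succ]
    norm_num [Finset.sum_range_succ, pow_one, hc0, hc1, hc2, hc3, hc4, hc5, hP7_0, hP7_1, hP7_2, hP7_3, hP7_4, hP7_5]
  have hP8_6 : PowerSeries.coeff 6 ((Lser F) ^ 8) = 0 := by
    rw [(by norm_num : (8:ℕ) = 7 + 1), coeff_pow_succ]
    norm_num [Finset.sum_range_succ, pow_one, hc0, hc1, hc2, hc3, hc4, hc5, hc6, hP7_0, hP7_1, hP7_2, hP7_3, hP7_4, hP7_5, hP7_6]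
  have hP8_7 : PowerSeries.coeff 7 ((Lser F) ^ 8) = 0 := by
    rw [(by norm_num : (8:ℕ) = 7 + 1), coeff_pow_succ]
    norm_num [Finset.sum_range_succ, pow_one, hc0, hc1, hc2, hc3, hc4, hc5, hc6, hc7, hP7_0, hP7_1, hP7_2, hP7_3, hP7_4, hP7_5, hP7_6, hP7_7]
  have hP8_8 : PowerSeries.coeff 8 ((Lser F) ^ 8) = 1 := by
    rw [(by norm_num : (8:ℕ) = 7 + 1), coeff_pow_succ]
    norm_num [Finset.sum_range_succ, pow_one, hc0, hc1, hc2, hc3, hc4, hc5, hc6, hc7, hc8, hP7_0, hP7_1, hP7_2, hP7_3, hP7_4, hP7_5, hP7_6, hP7_7, hP7_8]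
  have ha8 : PowerSeries.coeff 8 F = 1105 := by
    conv_lhs => rw [hF]
    rw [hre, coeff_expComp]
    norm_num [Finset.sum_range_succ, Nat.factorial, pow_zero, pow_one, PowerSeries.coeff_one, hc8, hP2_8, hP3_8, hP4_8, hP5_8, hP6_8, hP7_8, hP8_8]
  exact ⟨ha1, ha2, ha3, ha4, ha5, ha6, ha7, ha8⟩
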